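/- The explicit maps e₁ and e₂ define rational ℂ^×-actions: for i = 1, 2, e_i^1(x) = x for all x ∈ (ℝ_{>0})⁶, and e_i^{c} ∘ e_i^{c′}(x) = e_i^{cc′}(x) for all c, c′ ∈ ℝ_{>0} and all x ∈ (ℝ_{>0})⁶. -/

import Mathlib

/-!
Both actions have the same shape. For e₁ put t₀ = x₀/x₁, t₁ = x₀x₂/(x₁²x₃),
t₂ = x₀x₂x₄/(x₁²x₃²x₅) and P_k(c) = c(t₀ + ⋯ + t_{k-1}) + t_k + ⋯ + t₂; then
𝒞₁, 𝒞₃, 𝒞₅ are the ratios P₁/P₀, P₂/P₁, P₃/P₂. For e₂ the same holds with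
t₀ = x₁³/x₂, t₁ = x₁³x₃³/(x₂²x₄) and 𝒞₂, 𝒞₄ = P₁/P₀, P₂/P₁.

Applying e^{c'} sends t_i to t_i P₀² / (P_i(c') P_{i+1}(c')). Since P_j(c') = P₀ + (c' - 1)S_j with
S_j = t₀ + ⋯ + t_{j-1}, these terms telescope: their first k sum to P₀ S_k / P_k(c'). Consequently
P_k(c) at the new point is P₀ P_k(cc') / (c' P_k(c')), and the ratios compose:
𝒞(c, e^{c'}x) 𝒞(c', x) = 𝒞(cc', x). At c = 1 every P_k equals P₀, so every ratio is 1.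
-/

noncomputable section

/-- Denominator of 𝒞₁ (also the function ε₁): x₀/x₁ + x₀x₂/(x₁²x₃) + x₀x₂x₄/(x₁²x₃²x₅). -/
def s1 (x : Fin 6 → ℝ) : ℝ :=
  x 0 / x 1 + x 0 * x 2 / ((x 1) ^ 2 * x 3) + x 0 * x 2 * x 4 / ((x 1) ^ 2 * (x 3) ^ 2 * x 5)

/-- Numerator of 𝒞₁ = denominator of 𝒞₃. -/
def d3 (c : ℝ) (x : Fin 6 → ℝ) : ℝ :=
  c * x 0 / x 1 + x 0 * x 2 / ((x 1) ^ 2 * x 3) + x 0 * x 2 * x 4 / ((x 1) ^ 2 * (x 3) ^ 2 * x 5)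

/-- Numerator of 𝒞₃ = denominator of 𝒞₅. -/
def d5 (c : ℝ) (x : Fin 6 → ℝ) : ℝ :=
  c * x 0 / x 1 + c * x 0 * x 2 / ((x 1) ^ 2 * x 3)
    + x 0 * x 2 * x 4 / ((x 1) ^ 2 * (x 3) ^ 2 * x 5)

/-- 𝒞₁, 𝒞₃, 𝒞₅. -/
def C1 (c : ℝ) (x : Fin 6 → ℝ) : ℝ := d3 c x / s1 x
def C3 (c : ℝ) (x : Fin 6 → ℝ) : ℝ := d5 c x / d3 c x
def C5 (c : ℝ) (x : Fin 6 → ℝ) : ℝ := c * s1 x / d5 c x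

/-- Denominator of 𝒞₂ (also the function ε₂): x₁³/x₂ + x₁³x₃³/(x₂²x₄). -/
def s2 (x : Fin 6 → ℝ) : ℝ :=
  (x 1) ^ 3 / x 2 + (x 1) ^ 3 * (x 3) ^ 3 / ((x 2) ^ 2 * x 4)

/-- Numerator of 𝒞₂ = denominator of 𝒞₄. -/
def d4 (c : ℝ) (x : Fin 6 → ℝ) : ℝ :=
  c * (x 1) ^ 3 / x 2 + (x 1) ^ 3 * (x 3) ^ 3 / ((x 2) ^ 2 * x 4)

/-- 𝒞₂, 𝒞₄. -/
def C2 (c : ℝ) (x : Fin 6 → ℝ) : ℝ := d4 c x / s2 x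
def C4 (c : ℝ) (x : Fin 6 → ℝ) : ℝ := c * s2 x / d4 c x

/-- The action e₁^c(x) := (x₀, 𝒞₁x₁, x₂, 𝒞₃x₃, x₄, 𝒞₅x₅). -/
def e1act (c : ℝ) (x : Fin 6 → ℝ) : Fin 6 → ℝ :=
  ![x 0, C1 c x * x 1, x 2, C3 c x * x 3, x 4, C5 c x * x 5]

/-- The action e₂^c(x) := (x₀, x₁, 𝒞₂x₂, x₃, 𝒞₄x₄, x₅). -/
def e2act (c : ℝ) (x : Fin 6 → ℝ) : Fin 6 → ℝ :=
  ![x 0, x 1, C2 c x * x 2, x 3, C4 c x * x 4, x 5]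

open Finset

def prefixScaledSum (t : ℕ → ℝ) (n : ℕ) (c : ℝ) (k : ℕ) : ℝ :=
  c * ∑ i ∈ range k, t i + ∑ i ∈ Ico k n, t i

def scaleFactor (t : ℕ → ℝ) (n : ℕ) (c : ℝ) (k : ℕ) : ℝ :=
  prefixScaledSum t n c (k + 1) / prefixScaledSum t n c k

def twist (t : ℕ → ℝ) (n : ℕ) (c : ℝ) (i : ℕ) : ℝ :=
  t i * (∑ j ∈ range n, t j) ^ 2 / (prefixScaledSum t n c i * prefixScaledSum t n c (i + 1))

section prefixScaledSum

variable {t u : ℕ → ℝ} {n k : ℕ} {c c' : ℝ}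

theorem sum_range_pos_of_pos (ht : ∀ i < n, 0 < t i) (hn : 0 < n) : 0 < ∑ i ∈ range n, t i :=
  sum_pos (fun i hi => ht i (mem_range.1 hi)) (nonempty_range_iff.2 hn.ne')

theorem prefixScaledSum_eq (hk : k ≤ n) :
    prefixScaledSum t n c k = ∑ i ∈ range n, t i + (c - 1) * ∑ i ∈ range k, t i := by
  rw [prefixScaledSum, sum_Ico_eq_sub _ hk]
  ring

theorem prefixScaledSum_pos (hc : 0 < c) (ht : ∀ i < n, 0 < t i) (hk : k ≤ n) (hn : 0 < n) :
    0 < prefixScaledSum t n c k := by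
  have hIco : 0 ≤ ∑ i ∈ Ico k n, t i :=
    sum_nonneg fun i hi => (ht i (mem_Ico.1 hi).2).le
  rcases k.eq_zero_or_pos with rfl | hk0
  · simpa [prefixScaledSum] using sum_range_pos_of_pos ht hn
  · have hrange := sum_range_pos_of_pos (fun i hi => ht i (by omega)) hk0
    rw [prefixScaledSum]
    positivity

theorem prefixScaledSum_self : prefixScaledSum t n c n = c * ∑ i ∈ range n, t i := by
  simp [prefixScaledSum]

theorem scaleFactor_one (ht : ∀ i < n, 0 < t i) (hk : k < n) : scaleFactor t n 1 k = 1 := by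
  have hS := (sum_range_pos_of_pos ht (by omega)).ne'
  simp [scaleFactor, prefixScaledSum_eq hk.le, prefixScaledSum_eq (Nat.succ_le_of_lt hk), hS]

variable (hc' : 0 < c') (ht : ∀ i < n, 0 < t i)
  (hu : ∀ i < n, u i = twist t n c' i)
include hc' ht hu

theorem sum_range_twist (hk : k ≤ n) :
    ∑ i ∈ range k, u i
      = (∑ i ∈ range n, t i) * (∑ i ∈ range k, t i) / prefixScaledSum t n c' k := by
  induction k with
  | zero => simp
  | succ k ih =>
    have hPk := (prefixScaledSum_pos (k := k) hc' ht (by omega) (by omega)).ne'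
    have hPk' := (prefixScaledSum_pos hc' ht hk (by omega)).ne'
    rw [sum_range_succ, ih (by omega), hu k (by omega), twist]
    rw [prefixScaledSum_eq (by omega)] at hPk ⊢
    rw [prefixScaledSum_eq hk, sum_range_succ t] at hPk' ⊢
    rw [div_add_div _ _ hPk (mul_ne_zero hPk hPk'),
      div_eq_div_iff (mul_ne_zero hPk (mul_ne_zero hPk hPk')) hPk']
    ring

theorem prefixScaledSum_twist (hk : k ≤ n) :
    prefixScaledSum u n c k
      = (∑ i ∈ range n, t i) * prefixScaledSum t n (c * c') k
        / (c' * prefixScaledSum t n c' k) := by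
  rcases n.eq_zero_or_pos with rfl | hn
  · obtain rfl : k = 0 := by omega
    simp [prefixScaledSum]
  have hS := (sum_range_pos_of_pos ht hn).ne'
  have hPk := (prefixScaledSum_pos hc' ht hk hn).ne'
  rw [prefixScaledSum_eq hk, sum_range_twist hc' ht hu hk, sum_range_twist hc' ht hu le_rfl,
    prefixScaledSum_self]
  simp only [prefixScaledSum_eq hk] at hPk ⊢
  have hc0 := hc'.ne'
  rw [mul_div_assoc', div_add_div _ _ (mul_ne_zero hc0 hS) hPk,
    div_eq_div_iff (mul_ne_zero (mul_ne_zero hc0 hS) hPk) (mul_ne_zero hc0 hPk)]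
  ring

theorem scaleFactor_twist (hc : 0 < c) (hk : k < n) :
    scaleFactor u n c k * scaleFactor t n c' k = scaleFactor t n (c * c') k := by
  have hn : 0 < n := by omega
  have hS := (sum_range_pos_of_pos ht hn).ne'
  have hP := (prefixScaledSum_pos hc' ht hk.le hn).ne'
  have hP' := (prefixScaledSum_pos hc' ht hk hn).ne'
  have hQ := (prefixScaledSum_pos (mul_pos hc hc') ht hk.le hn).ne'
  have hQ' := (prefixScaledSum_pos (mul_pos hc hc') ht hk hn).ne'
  rw [scaleFactor, scaleFactor, scaleFactor, prefixScaledSum_twist hc' ht hu hk,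
    prefixScaledSum_twist hc' ht hu hk.le]
  field_simp

end prefixScaledSum

def e1Monomial (x : Fin 6 → ℝ) : ℕ → ℝ
  | 0 => x 0 / x 1
  | 1 => x 0 * x 2 / (x 1 ^ 2 * x 3)
  | _ + 2 => x 0 * x 2 * x 4 / (x 1 ^ 2 * x 3 ^ 2 * x 5)

section e1

variable {c c' : ℝ} {x : Fin 6 → ℝ}

theorem e1Monomial_pos (hx : ∀ i, 0 < x i) (i : ℕ) : 0 < e1Monomial x i := by
  have := hx 0; have := hx 1; have := hx 2; have := hx 3; have := hx 4; have := hx 5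
  rcases i with _ | _ | i <;> simp only [e1Monomial] <;> positivity

theorem sum_range_e1Monomial : ∑ i ∈ range 3, e1Monomial x i = s1 x := by
  simp [sum_range_succ, e1Monomial, s1]

theorem prefixScaledSum_e1Monomial_zero : prefixScaledSum (e1Monomial x) 3 c 0 = s1 x := by
  simp [prefixScaledSum, sum_range_succ, e1Monomial, s1]

theorem prefixScaledSum_e1Monomial_one : prefixScaledSum (e1Monomial x) 3 c 1 = d3 c x := by
  rw [prefixScaledSum_eq (by norm_num)]
  simp only [sum_range_succ, sum_range_zero, e1Monomial, d3]
  ring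

theorem prefixScaledSum_e1Monomial_two : prefixScaledSum (e1Monomial x) 3 c 2 = d5 c x := by
  rw [prefixScaledSum_eq (by norm_num)]
  simp only [sum_range_succ, sum_range_zero, e1Monomial, d5]
  ring

theorem prefixScaledSum_e1Monomial_three : prefixScaledSum (e1Monomial x) 3 c 3 = c * s1 x := by
  rw [prefixScaledSum_self, sum_range_e1Monomial]

theorem C1_eq_scaleFactor : C1 c x = scaleFactor (e1Monomial x) 3 c 0 := by
  rw [C1, scaleFactor, prefixScaledSum_e1Monomial_zero, prefixScaledSum_e1Monomial_one]

theorem C3_eq_scaleFactor : C3 c x = scaleFactor (e1Monomial x) 3 c 1 := by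
  rw [C3, scaleFactor, prefixScaledSum_e1Monomial_one, prefixScaledSum_e1Monomial_two]

theorem C5_eq_scaleFactor : C5 c x = scaleFactor (e1Monomial x) 3 c 2 := by
  rw [C5, scaleFactor, prefixScaledSum_e1Monomial_two, prefixScaledSum_e1Monomial_three]

theorem e1Monomial_e1act (hc' : 0 < c') (hx : ∀ i, 0 < x i) :
    ∀ i < 3, e1Monomial (e1act c' x) i = twist (e1Monomial x) 3 c' i := by
  have hP (k : ℕ) (hk : k ≤ 3) : prefixScaledSum (e1Monomial x) 3 c' k ≠ 0 :=
    (prefixScaledSum_pos hc' (fun i _ => e1Monomial_pos hx i) hk (by norm_num)).ne'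
  have hs : s1 x ≠ 0 := prefixScaledSum_e1Monomial_zero (c := c') ▸ hP 0 (by norm_num)
  have hd3 : d3 c' x ≠ 0 := prefixScaledSum_e1Monomial_one ▸ hP 1 (by norm_num)
  have hd5 : d5 c' x ≠ 0 := prefixScaledSum_e1Monomial_two ▸ hP 2 (by norm_num)
  have := (hx 1).ne'; have := (hx 3).ne'; have := (hx 5).ne'; have := hc'.ne'
  intro i hi
  rw [twist, sum_range_e1Monomial]
  interval_cases i <;>
    simp only [zero_add, Nat.reduceAdd, prefixScaledSum_e1Monomial_zero,
      prefixScaledSum_e1Monomial_one, prefixScaledSum_e1Monomial_two,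
      prefixScaledSum_e1Monomial_three] <;>
    simp [e1Monomial, e1act, C1, C3, C5] <;> field_simp

theorem e1act_one (hx : ∀ i, 0 < x i) : e1act 1 x = x := by
  have h (k : ℕ) (hk : k < 3) := scaleFactor_one (fun i _ => e1Monomial_pos hx i) hk
  ext i
  fin_cases i <;> simp [e1act, C1_eq_scaleFactor, C3_eq_scaleFactor, C5_eq_scaleFactor, h]

theorem e1act_e1act (hc : 0 < c) (hc' : 0 < c') (hx : ∀ i, 0 < x i) :
    e1act c (e1act c' x) = e1act (c * c') x := by
  have h (k : ℕ) (hk : k < 3) := scaleFactor_twist hc' (fun i _ => e1Monomial_pos hx i)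
    (e1Monomial_e1act hc' hx) hc hk
  ext i
  fin_cases i <;> simp [e1act, C1_eq_scaleFactor, C3_eq_scaleFactor, C5_eq_scaleFactor, ← h,
    mul_assoc]

end e1

def e2Monomial (x : Fin 6 → ℝ) : ℕ → ℝ
  | 0 => x 1 ^ 3 / x 2
  | _ + 1 => x 1 ^ 3 * x 3 ^ 3 / (x 2 ^ 2 * x 4)

section e2

variable {c c' : ℝ} {x : Fin 6 → ℝ}

theorem e2Monomial_pos (hx : ∀ i, 0 < x i) (i : ℕ) : 0 < e2Monomial x i := by
  have := hx 1; have := hx 2; have := hx 3; have := hx 4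
  rcases i with _ | i <;> simp only [e2Monomial] <;> positivity

theorem sum_range_e2Monomial : ∑ i ∈ range 2, e2Monomial x i = s2 x := by
  simp [sum_range_succ, e2Monomial, s2]

theorem prefixScaledSum_e2Monomial_zero : prefixScaledSum (e2Monomial x) 2 c 0 = s2 x := by
  simp [prefixScaledSum, sum_range_succ, e2Monomial, s2]

theorem prefixScaledSum_e2Monomial_one : prefixScaledSum (e2Monomial x) 2 c 1 = d4 c x := by
  rw [prefixScaledSum_eq (by norm_num)]
  simp only [sum_range_succ, sum_range_zero, e2Monomial, d4]
  ring

theorem prefixScaledSum_e2Monomial_two : prefixScaledSum (e2Monomial x) 2 c 2 = c * s2 x := by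
  rw [prefixScaledSum_self, sum_range_e2Monomial]

theorem C2_eq_scaleFactor : C2 c x = scaleFactor (e2Monomial x) 2 c 0 := by
  rw [C2, scaleFactor, prefixScaledSum_e2Monomial_zero, prefixScaledSum_e2Monomial_one]

theorem C4_eq_scaleFactor : C4 c x = scaleFactor (e2Monomial x) 2 c 1 := by
  rw [C4, scaleFactor, prefixScaledSum_e2Monomial_one, prefixScaledSum_e2Monomial_two]

theorem e2Monomial_e2act (hc' : 0 < c') (hx : ∀ i, 0 < x i) :
    ∀ i < 2, e2Monomial (e2act c' x) i = twist (e2Monomial x) 2 c' i := by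
  have hP (k : ℕ) (hk : k ≤ 2) : prefixScaledSum (e2Monomial x) 2 c' k ≠ 0 :=
    (prefixScaledSum_pos hc' (fun i _ => e2Monomial_pos hx i) hk (by norm_num)).ne'
  have hs : s2 x ≠ 0 := prefixScaledSum_e2Monomial_zero (c := c') ▸ hP 0 (by norm_num)
  have hd4 : d4 c' x ≠ 0 := prefixScaledSum_e2Monomial_one ▸ hP 1 (by norm_num)
  have := (hx 2).ne'; have := (hx 4).ne'; have := hc'.ne'
  intro i hi
  rw [twist, sum_range_e2Monomial]
  interval_cases i <;>
    simp only [zero_add, Nat.reduceAdd, prefixScaledSum_e2Monomial_zero,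
      prefixScaledSum_e2Monomial_one, prefixScaledSum_e2Monomial_two] <;>
    simp [e2Monomial, e2act, C2, C4] <;> field_simp

theorem e2act_one (hx : ∀ i, 0 < x i) : e2act 1 x = x := by
  have h (k : ℕ) (hk : k < 2) := scaleFactor_one (fun i _ => e2Monomial_pos hx i) hk
  ext i
  fin_cases i <;> simp [e2act, C2_eq_scaleFactor, C4_eq_scaleFactor, h]

theorem e2act_e2act (hc : 0 < c) (hc' : 0 < c') (hx : ∀ i, 0 < x i) :
    e2act c (e2act c' x) = e2act (c * c') x := by
  have h (k : ℕ) (hk : k < 2) := scaleFactor_twist hc' (fun i _ => e2Monomial_pos hx i)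
    (e2Monomial_e2act hc' hx) hc hk
  ext i
  fin_cases i <;> simp [e2act, C2_eq_scaleFactor, C4_eq_scaleFactor, ← h, mul_assoc]

end e2

/-- e₁ and e₂ are rational ℂ^×-actions: eᵢ¹ = id and
eᵢ^c ∘ eᵢ^{c′} = eᵢ^{cc′} on (ℝ_{>0})⁶. -/
theorem e1_e2_are_actions :
    (∀ x : Fin 6 → ℝ, (∀ i, 0 < x i) → e1act 1 x = x) ∧
    (∀ c c' : ℝ, 0 < c → 0 < c' → ∀ x : Fin 6 → ℝ, (∀ i, 0 < x i) →
      e1act c (e1act c' x) = e1act (c * c') x) ∧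
    (∀ x : Fin 6 → ℝ, (∀ i, 0 < x i) → e2act 1 x = x) ∧
    (∀ c c' : ℝ, 0 < c → 0 < c' → ∀ x : Fin 6 → ℝ, (∀ i, 0 < x i) →
      e2act c (e2act c' x) = e2act (c * c') x) :=
  ⟨fun _ hx => e1act_one hx, fun _ _ hc hc' _ hx => e1act_e1act hc hc' hx,
    fun _ hx => e2act_one hx, fun _ _ hc hc' _ hx => e2act_e2act hc hc' hx⟩
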